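/- For t > 0 and n ≥ 0, ∫_0^∞ u^n · t·exp(−(u−t)²/(2u))/√(2πu³) du = w_n(t), where w_0(t) = 1 and w_n(t) = Σ_{j=0}^{n−1} ((n+j−1)! t^{n−j})/(j!(n−j−1)! 2^j) for n ≥ 1. That is, the n-th moment of the inverse Gaussian distribution with density ρ_t equals w_n(t). -/

import Mathlib

open Real MeasureTheory

/-- The inverse Gaussian density with both parameters equal to `t`. -/
noncomputable def ρ (t u : ℝ) : ℝ :=
  t * Real.exp (-(u - t) ^ 2 / (2 * u)) / Real.sqrt (2 * π * u ^ 3)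

/-- The basic polynomials of the delta operator `D - (1/2)D²`. -/
noncomputable def w (n : ℕ) (t : ℝ) : ℝ :=
  if n = 0 then 1 else
    ∑ j ∈ Finset.range n,
      ((n + j - 1).factorial : ℝ) * t ^ (n - j) / (j.factorial * (n - j - 1).factorial * 2 ^ j)

/-!
The substitution `y = √u - t / √u` maps `(0, ∞)` onto `ℝ` and turns `(ρ t u + u * ρ t u / t) du / 2`
into the standard Gaussian measure, while the involution `u ↦ t² / u` turns `u * ρ t u du` into
`t * ρ t u du`. Together they give mass `1` and mean `t`. Integrating the derivative of
`u ^ (n + 2) * ρ t u` over `(0, ∞)`, whose boundary terms vanish, gives the moment recurrence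
`M (n + 2) = (2n + 1) M (n + 1) + t² M n`, and the coefficients of `w` obey a Pascal-type rule
that yields the same recurrence for `w`.
-/

open Set Filter Topology

section Moments

variable {t : ℝ}

lemma ρ_nonneg (ht : 0 ≤ t) (u : ℝ) : 0 ≤ ρ t u := by
  unfold ρ; positivity

lemma measurable_ρ (t : ℝ) : Measurable (ρ t) := by
  unfold ρ; fun_prop

lemma sqrt_two_pi_mul_pow_three {u : ℝ} (hu : 0 ≤ u) : √(2 * π * u ^ 3) = √(2 * π) * (u * √u) := by
  rw [show 2 * π * u ^ 3 = 2 * π * (u ^ 2 * u) by ring, sqrt_mul (by positivity : (0 : ℝ) ≤ 2 * π),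
    sqrt_mul (sq_nonneg u), sqrt_sq hu]

lemma pow_mul_ρ_le (ht : 0 < t) {u : ℝ} (hu : 0 < u) (n : ℕ) :
    u ^ n * ρ t u ≤ 2 * exp t / (t * √(2 * π)) * (u ^ ((n : ℝ) - 1 / 2) * exp (-(1 / 2) * u)) := by
  have hexp : exp (-(u - t) ^ 2 / (2 * u)) =
      exp t * exp (-(1 / 2) * u) * exp (-(t ^ 2 / (2 * u))) := by
    rw [← exp_add, ← exp_add]; congr 1; field_simp; ring
  -- the factor `exp (-t² / (2u))` absorbs one power of `u⁻¹` near the origin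
  have htail : exp (-(t ^ 2 / (2 * u))) ≤ 2 * u / t ^ 2 := by
    rw [exp_neg, inv_le_comm₀ (exp_pos _) (by positivity), inv_div]
    linarith [add_one_le_exp (t ^ 2 / (2 * u))]
  have hpow : u ^ ((n : ℝ) - 1 / 2) = u ^ n / √u := by
    rw [rpow_sub hu, rpow_natCast, sqrt_eq_rpow]
  rw [ρ, hexp, sqrt_two_pi_mul_pow_three hu.le, hpow]
  have hs : 0 < √u := sqrt_pos.2 hu
  calc u ^ n * (t * (exp t * exp (-(1 / 2) * u) * exp (-(t ^ 2 / (2 * u)))) / (√(2 * π) * (u * √u)))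
      ≤ u ^ n * (t * (exp t * exp (-(1 / 2) * u) * (2 * u / t ^ 2)) / (√(2 * π) * (u * √u))) := by
        gcongr
    _ = _ := by field_simp

lemma integrableOn_pow_mul_ρ (ht : 0 < t) (n : ℕ) :
    IntegrableOn (fun u => u ^ n * ρ t u) (Ioi 0) := by
  have hdom : IntegrableOn (fun u : ℝ => 2 * exp t / (t * √(2 * π)) *
      (u ^ ((n : ℝ) - 1 / 2) * exp (-(1 / 2) * u))) (Ioi 0) := by
    have h := integrableOn_rpow_mul_exp_neg_mul_rpow (s := (n : ℝ) - 1 / 2) (p := 1)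
      (by linarith [n.cast_nonneg (α := ℝ)]) one_pos (by norm_num : (0 : ℝ) < 1 / 2)
    simp only [rpow_one] at h
    exact h.const_mul _
  refine hdom.mono' ((measurable_id.pow_const n).mul (measurable_ρ t)).aestronglyMeasurable ?_
  filter_upwards [ae_restrict_mem measurableSet_Ioi] with u hu
  rw [norm_of_nonneg (mul_nonneg (pow_nonneg (le_of_lt hu) n) (ρ_nonneg ht.le u))]
  exact pow_mul_ρ_le ht hu n

lemma tendsto_pow_mul_ρ_atTop (ht : 0 < t) (n : ℕ) :
    Tendsto (fun u => u ^ n * ρ t u) atTop (𝓝 0) := by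
  have hdom := (tendsto_rpow_mul_exp_neg_mul_atTop_nhds_zero ((n : ℝ) - 1 / 2) (1 / 2)
    (by norm_num)).const_mul (2 * exp t / (t * √(2 * π)))
  rw [mul_zero] at hdom
  refine tendsto_of_tendsto_of_tendsto_of_le_of_le' tendsto_const_nhds hdom ?_ ?_
  · filter_upwards [Ioi_mem_atTop 0] with u hu
    exact mul_nonneg (pow_nonneg (le_of_lt hu) _) (ρ_nonneg ht.le u)
  · filter_upwards [Ioi_mem_atTop 0] with u hu using pow_mul_ρ_le ht hu n

lemma tendsto_pow_succ_mul_ρ_nhdsGT (ht : 0 < t) (n : ℕ) :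
    Tendsto (fun u => u ^ (n + 1) * ρ t u) (𝓝[>] 0) (𝓝 0) := by
  have hcont : ContinuousAt (fun u : ℝ => 2 * exp t / (t * √(2 * π)) *
      (u ^ (((n + 1 : ℕ) : ℝ) - 1 / 2) * exp (-(1 / 2) * u))) 0 := by
    refine continuousAt_const.mul ((continuousAt_rpow_const _ _ (Or.inr ?_)).mul (by fun_prop))
    push_cast; linarith [n.cast_nonneg (α := ℝ)]
  have hdom := hcont.tendsto.mono_left (nhdsWithin_le_nhds (s := Ioi 0))
  rw [zero_rpow (by push_cast; linarith [n.cast_nonneg (α := ℝ)]), zero_mul, mul_zero] at hdom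
  refine tendsto_of_tendsto_of_tendsto_of_le_of_le' tendsto_const_nhds hdom ?_ ?_
  · filter_upwards [self_mem_nhdsWithin] with u hu
    exact mul_nonneg (pow_nonneg (le_of_lt hu) _) (ρ_nonneg ht.le u)
  · filter_upwards [self_mem_nhdsWithin] with u hu using pow_mul_ρ_le ht hu (n + 1)

lemma hasDerivAt_ρ {u : ℝ} (hu : 0 < u) :
    HasDerivAt (ρ t) ((t ^ 2 / (2 * u ^ 2) - 1 / 2 - 3 / (2 * u)) * ρ t u) u := by
  have hφ : HasDerivAt (fun v => -(v - t) ^ 2 / (2 * v)) (t ^ 2 / (2 * u ^ 2) - 1 / 2) u := by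
    have := (((hasDerivAt_id' u).sub_const t).fun_pow 2).fun_neg.fun_div
      ((hasDerivAt_id' u).const_mul 2) (by positivity)
    refine this.congr_deriv ?_
    field_simp
    ring
  have hs : 0 < √(2 * π * u ^ 3) := by positivity
  have hsq : √(2 * π * u ^ 3) ^ 2 = 2 * π * u ^ 3 := sq_sqrt (by positivity)
  have := (hφ.exp.const_mul t).div ((((hasDerivAt_pow 3 u).const_mul (2 * π))).sqrt (by positivity))
    hs.ne'
  refine this.congr_deriv ?_
  rw [ρ]
  generalize √(2 * π * u ^ 3) = s at hs hsq ⊢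
  field_simp
  norm_num
  linear_combination (3 * t * u) * hsq

lemma integral_pow_add_two_mul_ρ (ht : 0 < t) (n : ℕ) :
    ∫ u in Ioi (0 : ℝ), u ^ (n + 2) * ρ t u =
      (2 * n + 1) * (∫ u in Ioi (0 : ℝ), u ^ (n + 1) * ρ t u) +
        t ^ 2 * ∫ u in Ioi (0 : ℝ), u ^ n * ρ t u := by
  have hderiv : ∀ u ∈ Ioi (0 : ℝ), HasDerivAt (fun v => v ^ (n + 2) * ρ t v)
      ((n + 1 / 2) * (u ^ (n + 1) * ρ t u) - 1 / 2 * (u ^ (n + 2) * ρ t u) +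
        t ^ 2 / 2 * (u ^ n * ρ t u)) u := by
    intro u hu
    refine ((hasDerivAt_pow (n + 2) u).fun_mul (hasDerivAt_ρ (t := t) hu)).congr_deriv ?_
    have hu0 : u ≠ 0 := hu.ne'
    rw [show n + 2 - 1 = n + 1 by omega]
    simp only [pow_succ]
    field_simp
    push_cast
    ring
  have hcont : ContinuousWithinAt (fun v => v ^ (n + 2) * ρ t v) (Ici 0) 0 := by
    rw [← continuousWithinAt_Ioi_iff_Ici, ContinuousWithinAt, zero_pow (by omega), zero_mul]
    exact tendsto_pow_succ_mul_ρ_nhdsGT ht (n + 1)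
  have i0 := (integrableOn_pow_mul_ρ ht n).const_mul (t ^ 2 / 2)
  have i1 := (integrableOn_pow_mul_ρ ht (n + 1)).const_mul (n + 1 / 2 : ℝ)
  have i2 := (integrableOn_pow_mul_ρ ht (n + 2)).const_mul (1 / 2 : ℝ)
  have h := integral_Ioi_of_hasDerivAt_of_tendsto hcont hderiv
    ((i1.sub' i2).fun_add i0) (tendsto_pow_mul_ρ_atTop ht _)
  rw [integral_add (i1.sub' i2) i0, integral_sub i1 i2, zero_pow (by omega), zero_mul,
    sub_zero] at h
  simp only [integral_const_mul] at h
  linear_combination (-2) * h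

lemma ρ_sq_div (ht : 0 < t) {v : ℝ} (hv : 0 < v) : ρ t (t ^ 2 / v) = (v / t) ^ 3 * ρ t v := by
  have hsqrt : √(2 * π * (t ^ 2 / v) ^ 3) = (t / v) ^ 3 * √(2 * π * v ^ 3) := by
    rw [show 2 * π * (t ^ 2 / v) ^ 3 = ((t / v) ^ 3) ^ 2 * (2 * π * v ^ 3) by field_simp,
      sqrt_mul (by positivity), sqrt_sq (by positivity)]
  have hexp : -(t ^ 2 / v - t) ^ 2 / (2 * (t ^ 2 / v)) = -(v - t) ^ 2 / (2 * v) := by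
    field_simp; ring
  rw [ρ, ρ, hsqrt, hexp]
  field_simp

lemma integral_mul_ρ (ht : 0 < t) :
    ∫ u in Ioi (0 : ℝ), u * ρ t u = t * ∫ u in Ioi (0 : ℝ), ρ t u := by
  have hinv : Function.Involutive fun v : ℝ => t ^ 2 / v := fun v => div_div_cancel₀ (by positivity)
  have himage : (fun v : ℝ => t ^ 2 / v) '' Ioi 0 = Ioi 0 := by
    ext u
    refine ⟨?_, fun (hu : 0 < u) => ⟨t ^ 2 / u, div_pos (by positivity) hu, hinv u⟩⟩
    rintro ⟨v, hv : 0 < v, rfl⟩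
    exact div_pos (by positivity) hv
  have hderiv : ∀ v ∈ Ioi (0 : ℝ),
      HasDerivWithinAt (fun v => t ^ 2 / v) (-(t ^ 2 / v ^ 2)) (Ioi 0) v :=
    fun v hv => by
      simpa [div_eq_mul_inv] using ((hasDerivAt_inv hv.ne').const_mul (t ^ 2)).hasDerivWithinAt
  have h := integral_image_eq_integral_abs_deriv_smul measurableSet_Ioi hderiv hinv.injective.injOn
    (fun u => u * ρ t u)
  rw [himage] at h
  rw [h, ← integral_const_mul]
  refine setIntegral_congr_fun measurableSet_Ioi fun v (hv : 0 < v) => ?_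
  rw [smul_eq_mul, ρ_sq_div ht hv, abs_neg, abs_of_pos (by positivity)]
  field_simp

lemma integral_exp_neg_sq_div_two : ∫ y : ℝ, exp (-y ^ 2 / 2) = √(2 * π) := by
  simpa [neg_div, div_eq_inv_mul, div_inv_eq_mul, mul_comm] using integral_gaussian (1 / 2)

lemma hasDerivAt_sqrt_sub_div_sqrt {u : ℝ} (hu : 0 < u) :
    HasDerivAt (fun u => √u - t / √u) (1 / (2 * √u) + t / (2 * u * √u)) u := by
  have hs : HasDerivAt sqrt (1 / (2 * √u)) u := by simpa using hasDerivAt_sqrt hu.ne'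
  refine (hs.sub ((hasDerivAt_const u t).div hs (sqrt_pos.2 hu).ne')).congr_deriv ?_
  have := sq_sqrt hu.le
  field_simp
  rw [this]
  ring

lemma strictMonoOn_sqrt_sub_div_sqrt (ht : 0 ≤ t) : StrictMonoOn (fun u => √u - t / √u) (Ioi 0) :=
  fun a (ha : 0 < a) b _ hab => by
    have hsab := sqrt_lt_sqrt ha.le hab
    have : t / √b ≤ t / √a := div_le_div_of_nonneg_left ht (sqrt_pos.2 ha) hsab.le
    simp only
    linarith

lemma image_sqrt_sub_div_sqrt (ht : 0 < t) : (fun u => √u - t / √u) '' Ioi 0 = univ := by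
  refine eq_univ_of_forall fun y => ?_
  set s := (y + √(y ^ 2 + 4 * t)) / 2
  have hr : |y| < √(y ^ 2 + 4 * t) := by
    rw [← sqrt_sq_eq_abs]
    exact sqrt_lt_sqrt (sq_nonneg y) (by linarith)
  have hs : 0 < s := by simp only [s]; linarith [neg_abs_le y]
  have hquad : s * s = y * s + t := by
    linear_combination (1 / 4 : ℝ) * sq_sqrt (by positivity : 0 ≤ y ^ 2 + 4 * t)
  refine ⟨s ^ 2, pow_pos hs 2, ?_⟩
  simp only [sqrt_sq hs.le]
  field_simp
  linarith

lemma integral_ρ (ht : 0 < t) : ∫ u in Ioi (0 : ℝ), ρ t u = 1 := by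
  have hpoint : ∀ u ∈ Ioi (0 : ℝ),
      |1 / (2 * √u) + t / (2 * u * √u)| • exp (-(√u - t / √u) ^ 2 / 2) =
        √(2 * π) / (2 * t) * (t * ρ t u + u * ρ t u) := by
    intro u (hu : 0 < u)
    have hs : 0 < √u := sqrt_pos.2 hu
    have hexp : -(√u - t / √u) ^ 2 / 2 = -(u - t) ^ 2 / (2 * u) := by
      field_simp
      rw [sq_sqrt hu.le]
      ring
    rw [smul_eq_mul, abs_of_pos (by positivity), hexp, ρ, sqrt_two_pi_mul_pow_three hu.le]
    field_simp
    ring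
  have i0 : IntegrableOn (ρ t) (Ioi 0) := by simpa using integrableOn_pow_mul_ρ ht 0
  have i1 : IntegrableOn (fun u => u * ρ t u) (Ioi 0) := by simpa using integrableOn_pow_mul_ρ ht 1
  have h := integral_image_eq_integral_abs_deriv_smul measurableSet_Ioi
    (fun u (hu : 0 < u) => (hasDerivAt_sqrt_sub_div_sqrt hu).hasDerivWithinAt)
    (strictMonoOn_sqrt_sub_div_sqrt ht.le).injOn (fun y => exp (-y ^ 2 / 2))
  rw [image_sqrt_sub_div_sqrt ht, setIntegral_univ, integral_exp_neg_sq_div_two,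
    setIntegral_congr_fun measurableSet_Ioi hpoint, integral_const_mul,
    integral_add (i0.const_mul t) i1, integral_const_mul, integral_mul_ρ ht] at h
  have hpi : 0 < √(2 * π) := by positivity
  field_simp at h
  nlinarith

end Moments

section Polynomials

open Finset

/-- The `j`-th summand of `w (i + j + 1)`, divided by `t ^ (i + 1)`; indexing by `i` and `j`
avoids natural-number subtraction. -/
noncomputable def wCoeff (i j : ℕ) : ℝ :=
  (i + 2 * j).factorial / (i.factorial * j.factorial * 2 ^ j)

lemma wCoeff_zero_right (i : ℕ) : wCoeff i 0 = 1 := by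
  simp [wCoeff, Nat.factorial_ne_zero]

lemma wCoeff_zero_succ (j : ℕ) : wCoeff 0 (j + 1) = (2 * j + 1) * wCoeff 0 j := by
  simp only [wCoeff, show 0 + 2 * (j + 1) = 2 * j + 1 + 1 by ring, Nat.factorial_succ, zero_add]
  push_cast
  field_simp
  ring

lemma wCoeff_one_succ (j : ℕ) : wCoeff 1 (j + 1) = (2 * j + 3) * wCoeff 1 j := by
  simp only [wCoeff, show 1 + 2 * (j + 1) = 1 + 2 * j + 1 + 1 by ring, Nat.factorial_succ]
  push_cast
  field_simp
  ring

lemma wCoeff_add_two_succ (i j : ℕ) :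
    wCoeff (i + 2) (j + 1) = (2 * (i + j) + 5) * wCoeff (i + 2) j + wCoeff i (j + 1) := by
  simp only [wCoeff, show i + 2 + 2 * (j + 1) = i + 2 * j + 1 + 1 + 1 + 1 by ring,
    show i + 2 + 2 * j = i + 2 * j + 1 + 1 by ring,
    show i + 2 * (j + 1) = i + 2 * j + 1 + 1 by ring,
    Nat.factorial_succ]
  push_cast
  field_simp
  ring

lemma w_succ_eq_sum_antidiagonal (m : ℕ) (t : ℝ) :
    w (m + 1) t = ∑ p ∈ antidiagonal m, wCoeff p.1 p.2 * t ^ (p.1 + 1) := by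
  rw [w, if_neg m.succ_ne_zero, ← Nat.sum_antidiagonal_swap,
    Nat.sum_antidiagonal_eq_sum_range_succ_mk]
  refine sum_congr rfl fun j hj => ?_
  obtain ⟨i, rfl⟩ : ∃ i, m = i + j := ⟨m - j, by have := mem_range.1 hj; omega⟩
  simp only [Prod.swap, wCoeff, Nat.add_sub_cancel, show i + j + 1 + j - 1 = i + 2 * j by omega,
    show i + j + 1 - j = i + 1 by omega]
  ring

lemma w_add_four (k : ℕ) (t : ℝ) :
    w (k + 4) t = (2 * (k + 2) + 1) * w (k + 3) t + t ^ 2 * w (k + 2) t := by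
  have h4 : w (k + 4) t = t ^ (k + 4) + wCoeff 0 (k + 3) * t + wCoeff 1 (k + 2) * t ^ 2 +
      ∑ p ∈ antidiagonal k, wCoeff (p.1 + 2) (p.2 + 1) * t ^ (p.1 + 3) := by
    rw [w_succ_eq_sum_antidiagonal, Nat.sum_antidiagonal_succ',
      Nat.sum_antidiagonal_succ (n := k + 1), Nat.sum_antidiagonal_succ (n := k), wCoeff_zero_right]
    ring
  have h3 : w (k + 3) t = wCoeff 0 (k + 2) * t + wCoeff 1 (k + 1) * t ^ 2 +
      ∑ p ∈ antidiagonal k, wCoeff (p.1 + 2) p.2 * t ^ (p.1 + 3) := by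
    rw [w_succ_eq_sum_antidiagonal, Nat.sum_antidiagonal_succ (n := k + 1),
      Nat.sum_antidiagonal_succ (n := k)]
    ring
  have h2 : w (k + 2) t =
      t ^ (k + 2) + ∑ p ∈ antidiagonal k, wCoeff p.1 (p.2 + 1) * t ^ (p.1 + 1) := by
    rw [w_succ_eq_sum_antidiagonal, Nat.sum_antidiagonal_succ', wCoeff_zero_right]
    ring
  have interior : ∑ p ∈ antidiagonal k, wCoeff (p.1 + 2) (p.2 + 1) * t ^ (p.1 + 3) =
      (2 * k + 5) * ∑ p ∈ antidiagonal k, wCoeff (p.1 + 2) p.2 * t ^ (p.1 + 3) +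
        t ^ 2 * ∑ p ∈ antidiagonal k, wCoeff p.1 (p.2 + 1) * t ^ (p.1 + 1) := by
    rw [mul_sum, mul_sum, ← sum_add_distrib]
    refine sum_congr rfl fun p hp => ?_
    rw [wCoeff_add_two_succ, ← Nat.cast_add, mem_antidiagonal.1 hp]
    ring
  rw [h4, h3, h2, interior, wCoeff_zero_succ, wCoeff_one_succ]
  push_cast
  ring

lemma w_add_two (n : ℕ) (t : ℝ) :
    w (n + 2) t = (2 * n + 1) * w (n + 1) t + t ^ 2 * w n t := by
  match n with
  | 0 => norm_num [w, sum_range_succ]; ring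
  | 1 => norm_num [w, sum_range_succ, Nat.factorial]; ring
  | k + 2 => rw [w_add_four]; push_cast; ring

end Polynomials

theorem stmt_13 (t : ℝ) (ht : 0 < t) (n : ℕ) :
    ∫ u in Set.Ioi (0 : ℝ), u ^ n * ρ t u = w n t := by
  induction n using Nat.twoStepInduction with
  | zero => simpa [w] using integral_ρ ht
  | one => simpa [w, integral_ρ ht] using integral_mul_ρ ht
  | more k ih₀ ih₁ => rw [integral_pow_add_two_mul_ρ ht, ih₀, ih₁, w_add_two]
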